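/- Gallager-type union bound with dependent codewords (equation (5)): For the random ensemble of sensor networks in the arbitrary connections model with uniformly distributed target vectors and a maximum-likelihood detector, for every ρ ∈ [0,1] and every partition {𝒮_w} of the complement of the distortion region, the ensemble-average error probability satisfies P_e ≤ (1/2^k) Σ_i Σ_{x_i ∈ 𝒳^n} Σ_{y ∈ 𝒴^n} P_{X_i}(x_i) P_{Y|X}(y|x_i) Σ_w ( Σ_{j ∈ 𝒮_w} Σ_{x_j ∈ 𝒳^n} P_{X_j|X_i}(x_j|x_i) ( P_{Y|X}(y|x_j) / P_{Y|X}(y|x_i) )^{1/(1+ρ)} )^ρ. -/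
import Mathlib


/-!
Sensing Capacity Theorem for the Arbitrary Connections Model (Theorem 1 of
"The Sensing Capacity of Sensor Networks").
-/

open Finset Filter

noncomputable section

/-- Shannon entropy (base 2) of a finitely supported distribution. -/
def H2 {α : Type*} [Fintype α] (p : α → ℝ) : ℝ :=
  ∑ a, -(p a * Real.logb 2 (p a))

/-- Kullback–Leibler divergence (base 2). -/
def KL2 {α : Type*} [Fintype α] (p q : α → ℝ) : ℝ :=
  ∑ a, p a * Real.logb 2 (p a / q a)

variable {𝒳 𝒴 : Type*} [Fintype 𝒳] [Fintype 𝒴] [DecidableEq 𝒳]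

/-- Law of a sensor's ideal output for a target vector of type `γ`:
`Ψ` applied to `c` i.i.d. bits with law `γ`. -/
def Pgam (c : ℕ) (Ψ : (Fin c → Bool) → 𝒳) (γ : Bool → ℝ) (x : 𝒳) : ℝ :=
  ∑ u : Fin c → Bool, if Ψ u = x then ∏ t, γ (u t) else 0

/-- Joint law of a sensor's pair of ideal outputs for a pair of target vectors of joint
type `lam`: `Ψ` applied componentwise to `c` i.i.d. bit-pairs with law `lam`. -/
def Plam (c : ℕ) (Ψ : (Fin c → Bool) → 𝒳) (lam : Bool → Bool → ℝ) (x₁ x₂ : 𝒳) : ℝ :=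
  ∑ u : Fin c → Bool, ∑ w : Fin c → Bool,
    if Ψ u = x₁ ∧ Ψ w = x₂ then ∏ t, lam (u t) (w t) else 0

/-- `P^γ_{XiY}(x,y) = P^γ(x) P_{Y|X}(y|x)`. -/
def PXY (c : ℕ) (Ψ : (Fin c → Bool) → 𝒳) (W : 𝒳 → 𝒴 → ℝ) (γ : Bool → ℝ) :
    𝒳 × 𝒴 → ℝ :=
  fun p => Pgam c Ψ γ p.1 * W p.1 p.2

/-- `Q^λ_{XiY}(x,y) = Σ_a P^λ(x,a) P_{Y|X}(y|a)`. -/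
def QXY (c : ℕ) (Ψ : (Fin c → Bool) → 𝒳) (W : 𝒳 → 𝒴 → ℝ) (lam : Bool → Bool → ℝ) :
    𝒳 × 𝒴 → ℝ :=
  fun p => ∑ a : 𝒳, Plam c Ψ lam p.1 a * W a p.2

/-- Ideal output vector (codeword) of the sensor network `s` on target vector `v`. -/
def cw (c k n : ℕ) (Ψ : (Fin c → Bool) → 𝒳) (s : Fin n → Fin c → Fin k)
    (v : Fin k → Bool) (ℓ : Fin n) : 𝒳 :=
  Ψ fun t => v (s ℓ t)

/-- Memoryless channel probability of observing `y` given ideal output vector `x`. -/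
def chan {𝒳 𝒴 : Type*} (n : ℕ) (W : 𝒳 → 𝒴 → ℝ) (x : Fin n → 𝒳) (y : Fin n → 𝒴) : ℝ :=
  ∏ ℓ, W (x ℓ) (y ℓ)

/-- Error indicator: the guess `u` errs on true vector `v` if the normalized Hamming
distance is at least `D` (i.e. `u ∉ 𝒟_v`). -/
def errInd (k : ℕ) (D : ℝ) (v u : Fin k → Bool) : ℝ :=
  if D ≤ (hammingDist u v : ℝ) / k then 1 else 0

/-- Expected probability of error of the network `s` with detector `g`, with target
vectors uniformly distributed, distortion criterion `D`. -/
def Pe (c k n : ℕ) (Ψ : (Fin c → Bool) → 𝒳) (W : 𝒳 → 𝒴 → ℝ) (D : ℝ)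
    (s : Fin n → Fin c → Fin k) (g : (Fin n → 𝒴) → (Fin k → Bool)) : ℝ :=
  ((2 : ℝ) ^ k)⁻¹ * ∑ v : Fin k → Bool, ∑ y : Fin n → 𝒴,
    chan n W (cw c k n Ψ s v) y * errInd k D v (g y)

/-- `g` is a maximum-likelihood detector for the sensor network `s`. -/
def IsML (c k n : ℕ) (Ψ : (Fin c → Bool) → 𝒳) (W : 𝒳 → 𝒴 → ℝ)
    (s : Fin n → Fin c → Fin k) (g : (Fin n → 𝒴) → (Fin k → Bool)) : Prop :=
  ∀ y : Fin n → 𝒴, ∀ u : Fin k → Bool,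
    chan n W (cw c k n Ψ s u) y ≤ chan n W (cw c k n Ψ s (g y)) y

/-- Rate `R` is achievable at distortion `D`: there is a sequence of sensor networks
`s(⌈nR⌉, n)` whose expected probability of error (uniform target vectors,
maximum-likelihood detection) tends to `0` as `n → ∞`. -/
def Achievable (c : ℕ) (Ψ : (Fin c → Bool) → 𝒳) (W : 𝒳 → 𝒴 → ℝ) (D R : ℝ) : Prop :=
  ∃ s : (n : ℕ) → Fin n → Fin c → Fin ⌈(n : ℝ) * R⌉₊,
    ∃ g : (n : ℕ) → (Fin n → 𝒴) → (Fin ⌈(n : ℝ) * R⌉₊ → Bool),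
      (∀ n : ℕ, IsML c ⌈(n : ℝ) * R⌉₊ n Ψ W (s n) (g n)) ∧
      Tendsto (fun n : ℕ => Pe c ⌈(n : ℝ) * R⌉₊ n Ψ W D (s n) (g n)) atTop (nhds 0)

/-- The sensing capacity at distortion `D`: the supremum of achievable rates. -/
def SensingCapacity (c : ℕ) (Ψ : (Fin c → Bool) → 𝒳) (W : 𝒳 → 𝒴 → ℝ) (D : ℝ) : ℝ :=
  sSup {R : ℝ | 0 < R ∧ Achievable c Ψ W D R}

/-- The set of joint types `λ` in the minimization: probability mass functions on
bit-pairs with `λ01 + λ10 ≥ D` and both marginals of `v_i` equal to `(1/2, 1/2)`. -/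
def ValidLam (D : ℝ) (lam : Bool → Bool → ℝ) : Prop :=
  (∀ a b, 0 ≤ lam a b) ∧ (∑ a : Bool, ∑ b : Bool, lam a b) = 1 ∧
    D ≤ lam false true + lam true false ∧
    lam false false + lam false true = 1 / 2 ∧
    lam true false + lam true true = 1 / 2

/-- The objective `D(P^γ_{XiY} ‖ Q^λ_{XiY}) / (H(λ) − H(γ))` with `γ = (1/2,1/2)`. -/
def ratioArb (c : ℕ) (Ψ : (Fin c → Bool) → 𝒳) (W : 𝒳 → 𝒴 → ℝ)
    (lam : Bool → Bool → ℝ) : ℝ :=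
  KL2 (PXY c Ψ W fun _ => 1 / 2) (QXY c Ψ W lam) /
    (H2 (fun p : Bool × Bool => lam p.1 p.2) - H2 (fun _ : Bool => (1 / 2 : ℝ)))

/-- The sensing capacity lower bound `C_LB(D)` for the arbitrary connections model. -/
def CLBArb (c : ℕ) (Ψ : (Fin c → Bool) → 𝒳) (W : 𝒳 → 𝒴 → ℝ) (D : ℝ) : ℝ :=
  sInf {r : ℝ | ∃ lam : Bool → Bool → ℝ, ValidLam D lam ∧ r = ratioArb c Ψ W lam}

/-- Ensemble-average error probability (each sensor's `c` connections uniform i.i.d.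
with replacement; `g` supplies a detector for each realization of the network). -/
def PeBar (c k n : ℕ) (Ψ : (Fin c → Bool) → 𝒳) (W : 𝒳 → 𝒴 → ℝ) (D : ℝ)
    (g : (Fin n → Fin c → Fin k) → (Fin n → 𝒴) → (Fin k → Bool)) : ℝ :=
  ((Fintype.card (Fin n → Fin c → Fin k) : ℝ))⁻¹ *
    ∑ s : Fin n → Fin c → Fin k, Pe c k n Ψ W D s (g s)

/-- Law `P_{X_i}` of the random codeword associated with target vector `v`. -/
def PXi (c k n : ℕ) (Ψ : (Fin c → Bool) → 𝒳) (v : Fin k → Bool)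
    (x : Fin n → 𝒳) : ℝ :=
  ((univ.filter fun s : Fin n → Fin c → Fin k => cw c k n Ψ s v = x).card : ℝ) /
    (Fintype.card (Fin n → Fin c → Fin k))

/-- Joint law `P_{X_i X_j}` of the (dependent) pair of random codewords associated with
target vectors `v` and `u`. -/
def PXiXj (c k n : ℕ) (Ψ : (Fin c → Bool) → 𝒳) (v u : Fin k → Bool)
    (xi xj : Fin n → 𝒳) : ℝ :=
  ((univ.filter fun s : Fin n → Fin c → Fin k =>
      cw c k n Ψ s v = xi ∧ cw c k n Ψ s u = xj).card : ℝ) /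
    (Fintype.card (Fin n → Fin c → Fin k))

/-- Jensen's inequality for `t ↦ t ^ ρ` with `ρ ∈ [0,1]` (concavity, uniform weights). -/
private lemma jensen_sum_rpow {α : Type*} (F : Finset α) (A : α → ℝ)
    (hA : ∀ s ∈ F, 0 ≤ A s) {ρ : ℝ} (hρ0 : 0 ≤ ρ) (hρ1 : ρ ≤ 1) :
    ∑ s ∈ F, A s ^ ρ ≤ (F.card : ℝ) * ((∑ s ∈ F, A s) / (F.card : ℝ)) ^ ρ := by
  rcases F.eq_empty_or_nonempty with rfl | hF
  · simp
  have hM : (0:ℝ) < F.card := by exact_mod_cast Finset.card_pos.mpr hF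
  rcases eq_or_lt_of_le hρ0 with rfl | hρ
  · simp
  have hp : (1:ℝ) ≤ 1 / ρ := by rw [le_div_iff₀ hρ]; linarith
  have key := Real.arith_mean_le_rpow_mean F (fun _ => (F.card : ℝ)⁻¹)
    (fun s => A s ^ ρ) (fun i _ => by positivity)
    (by simp [Finset.sum_const, nsmul_eq_mul, mul_inv_cancel₀ hM.ne'])
    (fun i hi => Real.rpow_nonneg (hA i hi) ρ) hp
  rw [one_div_one_div] at key
  have e2 : ∑ s ∈ F, (F.card:ℝ)⁻¹ * (A s ^ ρ) ^ (1/ρ) = (∑ s ∈ F, A s) / (F.card:ℝ) := by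
    have h1 : ∀ s ∈ F, (F.card:ℝ)⁻¹ * (A s ^ ρ) ^ (1/ρ) = (F.card:ℝ)⁻¹ * A s := by
      intro s hs
      rw [← Real.rpow_mul (hA s hs), mul_one_div_cancel hρ.ne', Real.rpow_one]
    rw [Finset.sum_congr rfl h1, ← Finset.mul_sum, inv_mul_eq_div]
  rw [e2] at key
  rw [← Finset.mul_sum] at key
  calc ∑ s ∈ F, A s ^ ρ = (F.card:ℝ) * ((F.card:ℝ)⁻¹ * ∑ s ∈ F, A s ^ ρ) := by
        field_simp
    _ ≤ (F.card:ℝ) * ((∑ s ∈ F, A s) / (F.card:ℝ)) ^ ρ :=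
        mul_le_mul_of_nonneg_left key hM.le

/-- **Gallager-type union bound with dependent codewords** (equation (5)): for every
`ρ ∈ [0,1]` and every family `{𝒮_w}` partitioning the complement of each distortion
region, the ensemble-average ML error probability is bounded by
`(1/2^k) Σ_i Σ_{x_i} Σ_y P_{X_i}(x_i) P(y|x_i) Σ_w
 (Σ_{j∈𝒮_w} Σ_{x_j} P_{X_j|X_i}(x_j|x_i) (P(y|x_j)/P(y|x_i))^{1/(1+ρ)})^ρ`. -/
theorem gallager_union_bound_dependent_codewords
    (c k n : ℕ) (Ψ : (Fin c → Bool) → 𝒳) (W : 𝒳 → 𝒴 → ℝ)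
    (hW0 : ∀ x y, 0 ≤ W x y) (hW1 : ∀ x, ∑ y, W x y = 1)
    (D : ℝ) (hD : D ∈ Set.Ioc (0 : ℝ) 1)
    (ρ : ℝ) (hρ : ρ ∈ Set.Icc (0 : ℝ) 1)
    (ι : Type*) [Fintype ι] (S : (Fin k → Bool) → ι → Finset (Fin k → Bool))
    (hdisj : ∀ v w w', w ≠ w' → Disjoint (S v w) (S v w'))
    (hcover : ∀ v u : Fin k → Bool,
      (∃ w, u ∈ S v w) ↔ D ≤ (hammingDist u v : ℝ) / k)
    (g : (Fin n → Fin c → Fin k) → (Fin n → 𝒴) → (Fin k → Bool))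
    (hML : ∀ s, IsML c k n Ψ W s (g s)) :
    PeBar c k n Ψ W D g ≤
      ((2 : ℝ) ^ k)⁻¹ * ∑ v : Fin k → Bool, ∑ xi : Fin n → 𝒳, ∑ y : Fin n → 𝒴,
        PXi c k n Ψ v xi * chan n W xi y *
          ∑ w : ι, (∑ u ∈ S v w, ∑ xj : Fin n → 𝒳,
            PXiXj c k n Ψ v u xi xj / PXi c k n Ψ v xi *
              (chan n W xj y / chan n W xi y) ^ (1 / (1 + ρ))) ^ ρ := by
  obtain ⟨hρ0, hρ1⟩ := hρ
  set N : ℝ := ((Fintype.card (Fin n → Fin c → Fin k) : ℕ) : ℝ) with hN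
  have hN0 : (0:ℝ) ≤ N := Nat.cast_nonneg _
  have hch : ∀ (x : Fin n → 𝒳) (y : Fin n → 𝒴), 0 ≤ chan n W x y := fun x y =>
    Finset.prod_nonneg fun _ _ => hW0 _ _
  have he : (0:ℝ) ≤ 1 / (1 + ρ) := by positivity
  have hPXi : ∀ (v : Fin k → Bool) (xi : Fin n → 𝒳), 0 ≤ PXi c k n Ψ v xi := fun v xi =>
    div_nonneg (Nat.cast_nonneg _) (Nat.cast_nonneg _)
  have hPXiXj : ∀ (v u : Fin k → Bool) (xi xj : Fin n → 𝒳), 0 ≤ PXiXj c k n Ψ v u xi xj :=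
    fun v u xi xj => div_nonneg (Nat.cast_nonneg _) (Nat.cast_nonneg _)
  have hB : ∀ (v : Fin k → Bool) (xi : Fin n → 𝒳) (y : Fin n → 𝒴) (w : ι),
      (0:ℝ) ≤ ∑ u ∈ S v w, ∑ xj : Fin n → 𝒳,
        PXiXj c k n Ψ v u xi xj / PXi c k n Ψ v xi *
          (chan n W xj y / chan n W xi y) ^ (1 / (1 + ρ)) := by
    intro v xi y w
    refine Finset.sum_nonneg fun u _ => Finset.sum_nonneg fun xj _ => ?_
    exact mul_nonneg (div_nonneg (hPXiXj _ _ _ _) (hPXi _ _))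
      (Real.rpow_nonneg (div_nonneg (hch _ _) (hch _ _)) _)
  have key : ∀ v : Fin k → Bool,
      N⁻¹ * ∑ s : Fin n → Fin c → Fin k, ∑ y : Fin n → 𝒴,
          chan n W (cw c k n Ψ s v) y * errInd k D v (g s y) ≤
      ∑ xi : Fin n → 𝒳, ∑ y : Fin n → 𝒴,
        PXi c k n Ψ v xi * chan n W xi y *
          ∑ w : ι, (∑ u ∈ S v w, ∑ xj : Fin n → 𝒳,
            PXiXj c k n Ψ v u xi xj / PXi c k n Ψ v xi *
              (chan n W xj y / chan n W xi y) ^ (1 / (1 + ρ))) ^ ρ := by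
    intro v
    -- Step A : pointwise Gallager bound on the error indicator
    have stepA : ∀ (s : Fin n → Fin c → Fin k) (y : Fin n → 𝒴),
        chan n W (cw c k n Ψ s v) y * errInd k D v (g s y) ≤
          chan n W (cw c k n Ψ s v) y *
            ∑ w : ι, (∑ u ∈ S v w,
              (chan n W (cw c k n Ψ s u) y / chan n W (cw c k n Ψ s v) y) ^ (1/(1+ρ))) ^ ρ := by
      intro s y
      have hAnn : ∀ w : ι, (0:ℝ) ≤ ∑ u ∈ S v w,
          (chan n W (cw c k n Ψ s u) y / chan n W (cw c k n Ψ s v) y) ^ (1/(1+ρ)) :=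
        fun w => Finset.sum_nonneg fun u _ =>
          Real.rpow_nonneg (div_nonneg (hch _ _) (hch _ _)) _
      have hFnn : (0:ℝ) ≤ ∑ w : ι, (∑ u ∈ S v w,
          (chan n W (cw c k n Ψ s u) y / chan n W (cw c k n Ψ s v) y) ^ (1/(1+ρ))) ^ ρ :=
        Finset.sum_nonneg fun w _ => Real.rpow_nonneg (hAnn w) _
      unfold errInd
      split_ifs with herr
      · rw [mul_one]
        rcases eq_or_lt_of_le (hch (cw c k n Ψ s v) y) with h0 | h0
        · rw [← h0, zero_mul]
        · refine le_mul_of_one_le_right h0.le ?_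
          obtain ⟨w0, hw0⟩ := (hcover v (g s y)).mpr herr
          have hr : (1:ℝ) ≤ chan n W (cw c k n Ψ s (g s y)) y / chan n W (cw c k n Ψ s v) y :=
            (one_le_div h0).mpr (hML s y v)
          have h1 : (1:ℝ) ≤ ∑ u ∈ S v w0,
              (chan n W (cw c k n Ψ s u) y / chan n W (cw c k n Ψ s v) y) ^ (1/(1+ρ)) := by
            calc (1:ℝ) = 1 ^ (1/(1+ρ)) := (Real.one_rpow _).symm
              _ ≤ (chan n W (cw c k n Ψ s (g s y)) y / chan n W (cw c k n Ψ s v) y) ^ (1/(1+ρ)) :=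
                  Real.rpow_le_rpow zero_le_one hr he
              _ ≤ _ := Finset.single_le_sum (fun u _ =>
                  Real.rpow_nonneg (div_nonneg (hch _ _) (hch _ _)) _) hw0
          calc (1:ℝ) = 1 ^ ρ := (Real.one_rpow _).symm
            _ ≤ (∑ u ∈ S v w0,
                (chan n W (cw c k n Ψ s u) y / chan n W (cw c k n Ψ s v) y) ^ (1/(1+ρ))) ^ ρ :=
                Real.rpow_le_rpow zero_le_one h1 hρ0
            _ ≤ _ := Finset.single_le_sum (fun w _ => Real.rpow_nonneg (hAnn w) _)
                (Finset.mem_univ w0)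
      · rw [mul_zero]
        exact mul_nonneg (hch _ _) hFnn
    -- Step B : fiberwise decomposition over the value of the codeword of v
    calc N⁻¹ * ∑ s : Fin n → Fin c → Fin k, ∑ y : Fin n → 𝒴,
            chan n W (cw c k n Ψ s v) y * errInd k D v (g s y)
        ≤ N⁻¹ * ∑ s : Fin n → Fin c → Fin k, ∑ y : Fin n → 𝒴,
            chan n W (cw c k n Ψ s v) y *
              ∑ w : ι, (∑ u ∈ S v w,
                (chan n W (cw c k n Ψ s u) y / chan n W (cw c k n Ψ s v) y) ^ (1/(1+ρ))) ^ ρ := by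
          refine mul_le_mul_of_nonneg_left ?_ (inv_nonneg.mpr hN0)
          exact Finset.sum_le_sum fun s _ => Finset.sum_le_sum fun y _ => stepA s y
      _ = ∑ xi : Fin n → 𝒳, N⁻¹ *
            ∑ s ∈ univ.filter (fun s : Fin n → Fin c → Fin k => cw c k n Ψ s v = xi),
              ∑ y : Fin n → 𝒴, chan n W (cw c k n Ψ s v) y *
                ∑ w : ι, (∑ u ∈ S v w,
                  (chan n W (cw c k n Ψ s u) y / chan n W (cw c k n Ψ s v) y) ^ (1/(1+ρ))) ^ ρ := by
          rw [← Finset.sum_fiberwise univ (fun s : Fin n → Fin c → Fin k => cw c k n Ψ s v)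
            (fun s : Fin n → Fin c → Fin k => ∑ y : Fin n → 𝒴, chan n W (cw c k n Ψ s v) y *
              ∑ w : ι, (∑ u ∈ S v w,
                (chan n W (cw c k n Ψ s u) y / chan n W (cw c k n Ψ s v) y) ^ (1/(1+ρ))) ^ ρ),
            Finset.mul_sum]
      _ ≤ _ := by
          refine Finset.sum_le_sum fun xi _ => ?_
          set Fib : Finset (Fin n → Fin c → Fin k) :=
            univ.filter (fun s : Fin n → Fin c → Fin k => cw c k n Ψ s v = xi) with hFib
          -- rewrite the codeword of v inside the fiber
          have hrw : ∑ s ∈ Fib, ∑ y : Fin n → 𝒴, chan n W (cw c k n Ψ s v) y *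
                ∑ w : ι, (∑ u ∈ S v w,
                  (chan n W (cw c k n Ψ s u) y / chan n W (cw c k n Ψ s v) y) ^ (1/(1+ρ))) ^ ρ
              = ∑ y : Fin n → 𝒴, chan n W xi y * ∑ s ∈ Fib,
                ∑ w : ι, (∑ u ∈ S v w,
                  (chan n W (cw c k n Ψ s u) y / chan n W xi y) ^ (1/(1+ρ))) ^ ρ := by
            rw [Finset.sum_congr rfl (fun s hs => by
              rw [(Finset.mem_filter.mp hs).2]), Finset.sum_comm]
            exact Finset.sum_congr rfl fun y _ => (Finset.mul_sum _ _ _).symm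
          rw [hrw, Finset.mul_sum]
          refine Finset.sum_le_sum fun y _ => ?_
          -- now fixed xi and y
          rcases Fib.eq_empty_or_nonempty with hFe | hFne
          · rw [hFe]
            simp only [Finset.sum_empty, mul_zero]
            exact mul_nonneg (mul_nonneg (hPXi v xi) (hch _ _))
              (Finset.sum_nonneg fun w _ => Real.rpow_nonneg (hB v xi y w) _)
          · have hMpos : (0:ℝ) < (Fib.card : ℝ) := by
              exact_mod_cast Finset.card_pos.mpr hFne
            have hNpos : (0:ℝ) < N := by
              have h1 := Finset.card_le_univ Fib
              have h2 : (Fib.card : ℝ) ≤ N := by rw [hN]; exact_mod_cast h1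
              linarith
            -- the key identity : conditional law within the fiber
            have hPP : ∀ (u : Fin k → Bool) (xj : Fin n → 𝒳),
                PXiXj c k n Ψ v u xi xj / PXi c k n Ψ v xi
                  = ((Fib.filter fun s => cw c k n Ψ s u = xj).card : ℝ) / (Fib.card : ℝ) := by
              intro u xj
              have hcnt : (Fib.filter fun s => cw c k n Ψ s u = xj)
                  = univ.filter (fun s : Fin n → Fin c → Fin k =>
                      cw c k n Ψ s v = xi ∧ cw c k n Ψ s u = xj) := by
                rw [hFib, Finset.filter_filter]
              unfold PXiXj PXi
              rw [hcnt, ← hN, ← hFib]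
              field_simp
            have hsumA : ∀ w : ι,
                ∑ s ∈ Fib, ∑ u ∈ S v w,
                    (chan n W (cw c k n Ψ s u) y / chan n W xi y) ^ (1/(1+ρ))
                  = (Fib.card : ℝ) * ∑ u ∈ S v w, ∑ xj : Fin n → 𝒳,
                      PXiXj c k n Ψ v u xi xj / PXi c k n Ψ v xi *
                        (chan n W xj y / chan n W xi y) ^ (1/(1+ρ)) := by
              intro w
              rw [Finset.sum_comm]
              rw [Finset.mul_sum]
              refine Finset.sum_congr rfl fun u _ => ?_
              rw [← Finset.sum_fiberwise Fib (fun s => cw c k n Ψ s u)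
                (fun s => (chan n W (cw c k n Ψ s u) y / chan n W xi y) ^ (1/(1+ρ)))]
              rw [Finset.mul_sum]
              refine Finset.sum_congr rfl fun xj _ => ?_
              rw [Finset.sum_congr rfl (fun s hs => by rw [(Finset.mem_filter.mp hs).2]),
                Finset.sum_const, nsmul_eq_mul, hPP u xj]
              field_simp
            -- Jensen's inequality within the fiber
            have hjen : ∑ s ∈ Fib, ∑ w : ι, (∑ u ∈ S v w,
                  (chan n W (cw c k n Ψ s u) y / chan n W xi y) ^ (1/(1+ρ))) ^ ρ
                ≤ (Fib.card : ℝ) * ∑ w : ι, (∑ u ∈ S v w, ∑ xj : Fin n → 𝒳,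
                    PXiXj c k n Ψ v u xi xj / PXi c k n Ψ v xi *
                      (chan n W xj y / chan n W xi y) ^ (1/(1+ρ))) ^ ρ := by
              rw [Finset.sum_comm, Finset.mul_sum]
              refine Finset.sum_le_sum fun w _ => ?_
              have := jensen_sum_rpow Fib (fun s => ∑ u ∈ S v w,
                  (chan n W (cw c k n Ψ s u) y / chan n W xi y) ^ (1/(1+ρ)))
                (fun s _ => Finset.sum_nonneg fun u _ =>
                  Real.rpow_nonneg (div_nonneg (hch _ _) (hch _ _)) _) hρ0 hρ1
              refine this.trans (le_of_eq ?_)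
              rw [hsumA w, mul_div_cancel_left₀ _ hMpos.ne']
            have hPXieq : PXi c k n Ψ v xi = (Fib.card : ℝ) / N := by
              unfold PXi; rw [← hN, ← hFib]
            calc N⁻¹ * (chan n W xi y * ∑ s ∈ Fib, ∑ w : ι, (∑ u ∈ S v w,
                    (chan n W (cw c k n Ψ s u) y / chan n W xi y) ^ (1/(1+ρ))) ^ ρ)
                ≤ N⁻¹ * (chan n W xi y * ((Fib.card : ℝ) * ∑ w : ι, (∑ u ∈ S v w,
                    ∑ xj : Fin n → 𝒳, PXiXj c k n Ψ v u xi xj / PXi c k n Ψ v xi *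
                      (chan n W xj y / chan n W xi y) ^ (1/(1+ρ))) ^ ρ)) := by
                  exact mul_le_mul_of_nonneg_left
                    (mul_le_mul_of_nonneg_left hjen (hch _ _)) (inv_nonneg.mpr hN0)
              _ = PXi c k n Ψ v xi * chan n W xi y * ∑ w : ι, (∑ u ∈ S v w,
                    ∑ xj : Fin n → 𝒳, PXiXj c k n Ψ v u xi xj / PXi c k n Ψ v xi *
                      (chan n W xj y / chan n W xi y) ^ (1/(1+ρ))) ^ ρ := by
                  rw [hPXieq]; ring
  -- combine over target vectors
  have hsw : ∑ s : Fin n → Fin c → Fin k, ∑ v : Fin k → Bool, ∑ y : Fin n → 𝒴,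
        chan n W (cw c k n Ψ s v) y * errInd k D v (g s y)
      = ∑ v : Fin k → Bool, ∑ s : Fin n → Fin c → Fin k, ∑ y : Fin n → 𝒴,
        chan n W (cw c k n Ψ s v) y * errInd k D v (g s y) := Finset.sum_comm
  calc PeBar c k n Ψ W D g
      = N⁻¹ * ∑ s : Fin n → Fin c → Fin k, (((2:ℝ) ^ k)⁻¹ * ∑ v : Fin k → Bool,
          ∑ y : Fin n → 𝒴, chan n W (cw c k n Ψ s v) y * errInd k D v (g s y)) := rfl
    _ = ((2:ℝ) ^ k)⁻¹ * ∑ v : Fin k → Bool, N⁻¹ *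
          ∑ s : Fin n → Fin c → Fin k, ∑ y : Fin n → 𝒴,
            chan n W (cw c k n Ψ s v) y * errInd k D v (g s y) := by
        rw [← Finset.mul_sum, hsw, ← Finset.mul_sum]; ring
    _ ≤ ((2:ℝ) ^ k)⁻¹ * ∑ v : Fin k → Bool, ∑ xi : Fin n → 𝒳, ∑ y : Fin n → 𝒴,
          PXi c k n Ψ v xi * chan n W xi y *
            ∑ w : ι, (∑ u ∈ S v w, ∑ xj : Fin n → 𝒳,
              PXiXj c k n Ψ v u xi xj / PXi c k n Ψ v xi *
                (chan n W xj y / chan n W xi y) ^ (1 / (1 + ρ))) ^ ρ := by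
        refine mul_le_mul_of_nonneg_left (Finset.sum_le_sum fun v _ => key v) (by positivity)
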